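/- Let X and Y be square-integrable random vectors on a probability space (Ω, ℙ) with values in ℝⁿ, both having zero mean, with covariance matrices Σ_X and Σ_Y. Then 𝔼‖X − Y‖² ≤ tr(Σ_X) + tr(Σ_Y) + 2·tr((Σ_X^{1/2} Σ_Y Σ_X^{1/2})^{1/2}). -/

import Mathlib

open MeasureTheory Matrix
open scoped ENNReal
open scoped Classical

/-- The positive semidefinite square root of a matrix (junk value `0` if the matrix is not
positive semidefinite). -/
noncomputable def psdSqrt {n : ℕ} (A : Matrix (Fin n) (Fin n) ℝ) : Matrix (Fin n) (Fin n) ℝ :=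
  if h : A.PosSemidef then h.1.eigenvectorUnitary.1 * diagonal (Real.sqrt ∘ h.1.eigenvalues) *
    (star h.1.eigenvectorUnitary : Matrix (Fin n) (Fin n) ℝ) else 0

/-- The covariance matrix of a random vector `X : Ω → ℝⁿ`,
`(Σ_X)_{ij} = 𝔼[(X_i − 𝔼X_i)(X_j − 𝔼X_j)]`. -/
noncomputable def covMatrix {Ω : Type*} [MeasurableSpace Ω] (ℙ : Measure Ω) {n : ℕ}
    (X : Ω → EuclideanSpace ℝ (Fin n)) : Matrix (Fin n) (Fin n) ℝ :=
  Matrix.of fun i j =>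
    ∫ ω, (X ω i - ∫ ω', X ω' i ∂ℙ) * (X ω j - ∫ ω', X ω' j ∂ℙ) ∂ℙ

namespace DL
variable {n : ℕ}

open scoped MatrixOrder in
lemma psdSqrt_eq {A : Matrix (Fin n) (Fin n) ℝ} (h : A.PosSemidef) : psdSqrt A = CFC.sqrt A := by
  rw [psdSqrt, dif_pos h, CFC.sqrt_eq_real_sqrt A h.nonneg, cfcₙ_eq_cfc, h.1.cfc_eq, IsHermitian.cfc,
    Unitary.conjStarAlgAut_apply]
  rfl

open scoped MatrixOrder in
lemma psdSqrt_posSemidef {A : Matrix (Fin n) (Fin n) ℝ} (h : A.PosSemidef) :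
    (psdSqrt A).PosSemidef := by rw [psdSqrt_eq h]; exact nonneg_iff_posSemidef.mp (CFC.sqrt_nonneg A)

open scoped MatrixOrder in
lemma psdSqrt_mul_self {A : Matrix (Fin n) (Fin n) ℝ} (h : A.PosSemidef) :
    psdSqrt A * psdSqrt A = A := by rw [psdSqrt_eq h]; exact CFC.sqrt_mul_sqrt_self A h.nonneg

open scoped MatrixOrder in
lemma eq_psdSqrt {A B : Matrix (Fin n) (Fin n) ℝ} (hA : A.PosSemidef) (hB : B.PosSemidef)
    (h : B * B = A) : B = psdSqrt A := by
  rw [psdSqrt_eq hA]; exact (CFC.sqrt_unique h hB.nonneg).symm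

lemma symm_of_psd {A : Matrix (Fin n) (Fin n) ℝ} (h : A.PosSemidef) : Aᵀ = A := by
  rw [← conjTranspose_eq_transpose_of_trivial]; exact h.1

lemma psd_trace_nonneg' {A : Matrix (Fin n) (Fin n) ℝ} (h : A.PosSemidef) : 0 ≤ A.trace :=
  Finset.sum_nonneg fun i _ => by
    have := h.dotProduct_mulVec_nonneg (Pi.single i 1)
    simp only [star_trivial, single_dotProduct, mulVec_single] at this
    simpa [Matrix.diag] using this

lemma mulVec_dot_mulVec (M K : Matrix (Fin n) (Fin n) ℝ) (x y : Fin n → ℝ) :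
    (M *ᵥ x) ⬝ᵥ (K *ᵥ y) = x ⬝ᵥ ((Mᵀ * K) *ᵥ y) := by
  rw [← mulVec_mulVec, dotProduct_mulVec x, vecMul_transpose, dotProduct_mulVec]

lemma posDef_add_smul_one {A : Matrix (Fin n) (Fin n) ℝ} (hA : A.PosSemidef) {ε : ℝ}
    (hε : 0 < ε) : (A + ε • 1).PosDef := by
  refine posDef_iff_dotProduct_mulVec.mpr ⟨?_, ?_⟩
  · exact hA.1.add (by rw [IsHermitian, conjTranspose_smul]; simp)
  · intro x hx
    have h1 : (A + ε • 1) *ᵥ x = A *ᵥ x + ε • x := by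
      rw [add_mulVec, smul_mulVec, one_mulVec]
    rw [h1]
    simp only [star_trivial, dotProduct_add]
    have h2 : x ⬝ᵥ ε • x = ε * (x ⬝ᵥ x) := dotProduct_smul _ _ _
    have h3 : 0 < x ⬝ᵥ x := by
      have hnn : 0 ≤ x ⬝ᵥ x := Finset.sum_nonneg fun i _ => mul_self_nonneg _
      rcases lt_or_eq_of_le hnn with h | h
      · exact h
      · exact absurd (dotProduct_self_eq_zero.mp h.symm) hx
    have h4 : 0 ≤ x ⬝ᵥ A *ᵥ x := by simpa using hA.dotProduct_mulVec_nonneg x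
    rw [h2]
    positivity

lemma posDef_congr {C : Matrix (Fin n) (Fin n) ℝ} (hC : C.PosDef)
    {g : Matrix (Fin n) (Fin n) ℝ} (hgsym : gᵀ = g) (hg : IsUnit g.det) :
    (g * C * g).PosDef := by
  refine posDef_iff_dotProduct_mulVec.mpr ⟨?_, ?_⟩
  · have : (g * C * g)ᴴ = g * C * g := by
      rw [conjTranspose_eq_transpose_of_trivial, transpose_mul, transpose_mul, hgsym,
        show Cᵀ = C from by rw [← conjTranspose_eq_transpose_of_trivial]; exact hC.1, mul_assoc]
    exact this
  · intro x hx
    have hy : g *ᵥ x ≠ 0 := by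
      intro h
      apply hx
      have := congrArg (fun v => g⁻¹ *ᵥ v) h
      simpa [mulVec_mulVec, nonsing_inv_mul g hg] using this
    have key : x ⬝ᵥ ((g * C * g) *ᵥ x) = (g *ᵥ x) ⬝ᵥ (C *ᵥ (g *ᵥ x)) := by
      rw [mulVec_dot_mulVec, hgsym, mul_assoc, mulVec_mulVec, ← mul_assoc]
    simp only [star_trivial]
    rw [key]
    simpa using hC.dotProduct_mulVec_pos hy

variable {A : Matrix (Fin n) (Fin n) ℝ} (hA : A.PosSemidef)

noncomputable def g (hA : A.PosSemidef) (ε : ℝ) : Matrix (Fin n) (Fin n) ℝ :=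
  (hA.1.eigenvectorUnitary : Matrix (Fin n) (Fin n) ℝ) *
    diagonal (fun i => Real.sqrt (hA.1.eigenvalues i + ε)) *
    (star hA.1.eigenvectorUnitary : Matrix (Fin n) (Fin n) ℝ)

lemma g_posSemidef (ε : ℝ) : (g hA ε).PosSemidef := by
  have h := (posSemidef_diagonal_iff.mpr fun i =>
      Real.sqrt_nonneg (hA.1.eigenvalues i + ε)).mul_mul_conjTranspose_same
    (hA.1.eigenvectorUnitary : Matrix (Fin n) (Fin n) ℝ)
  rwa [← star_eq_conjTranspose] at h

lemma g_sq {ε : ℝ} (hε : 0 ≤ ε) : g hA ε * g hA ε = A + ε • 1 := by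
  set C : Matrix (Fin n) (Fin n) ℝ := (hA.1.eigenvectorUnitary : Matrix (Fin n) (Fin n) ℝ)
    with hC
  set E : Matrix (Fin n) (Fin n) ℝ := diagonal (fun i => Real.sqrt (hA.1.eigenvalues i + ε))
    with hE
  have hCC : (star hA.1.eigenvectorUnitary : Matrix (Fin n) (Fin n) ℝ) * C = 1 := by
    rw [hC]
    exact congrArg Subtype.val (Unitary.star_mul_self hA.1.eigenvectorUnitary)
  have hCC' : C * (star hA.1.eigenvectorUnitary : Matrix (Fin n) (Fin n) ℝ) = 1 := by
    rw [hC]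
    exact congrArg Subtype.val (Unitary.mul_star_self hA.1.eigenvectorUnitary)
  have hEE : E * E = diagonal (fun i => hA.1.eigenvalues i + ε) := by
    rw [hE, diagonal_mul_diagonal]
    exact congrArg diagonal (funext fun i =>
      Real.mul_self_sqrt (add_nonneg (hA.eigenvalues_nonneg i) hε))
  have expand : g hA ε * g hA ε =
      C * (E * ((star hA.1.eigenvectorUnitary : Matrix (Fin n) (Fin n) ℝ) * C) * E) *
        (star hA.1.eigenvectorUnitary : Matrix (Fin n) (Fin n) ℝ) := by
    unfold g
    simp only [← hC, ← hE, Matrix.mul_assoc]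
  rw [expand, hCC, mul_one, hEE]
  have hdiag : diagonal (fun i => hA.1.eigenvalues i + ε)
      = diagonal (hA.1.eigenvalues) + ε • 1 := by
    rw [smul_one_eq_diagonal, ← diagonal_add]
  rw [hdiag, mul_add, add_mul]
  congr 1
  · convert hA.1.spectral_theorem.symm using 2
    rw [Unitary.conjStarAlgAut_apply]; rfl
  · rw [mul_smul_comm, mul_one, smul_mul_assoc, hCC']

lemma g_cont : Continuous (g hA) := by
  unfold g
  exact (continuous_const.matrix_mul ((Continuous.matrix_diagonal (by continuity)))).matrix_mul
    continuous_const

lemma g_zero : g hA 0 = psdSqrt A := by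
  refine eq_psdSqrt hA (g_posSemidef hA 0) ?_
  rw [g_sq hA le_rfl, zero_smul, add_zero]

variable {B : Matrix (Fin n) (Fin n) ℝ}

lemma eps_bound (hA : A.PosSemidef) (hB : B.PosSemidef) {ε : ℝ} (hε : 0 < ε) :
    ∃ N : Matrix (Fin n) (Fin n) ℝ, IsUnit N.det ∧
      ((Nᵀ * N) * A).trace + ((N⁻¹ * N⁻¹ᵀ) * B).trace ≤
        2 * (psdSqrt (g hA ε * (B + ε • 1) * g hA ε)).trace := by
  set G := g hA ε with hG
  have hGpsd : G.PosSemidef := g_posSemidef hA ε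
  have hGsym : Gᵀ = G := symm_of_psd hGpsd
  have hGsq : G * G = A + ε • 1 := g_sq hA hε.le
  have hAεpd : (A + ε • 1).PosDef := posDef_add_smul_one hA hε
  have hGdet : IsUnit G.det := by
    refine isUnit_iff_ne_zero.mpr fun h0 => ?_
    have : (A + ε • 1).det = G.det * G.det := by rw [← hGsq, det_mul]
    rw [h0, mul_zero] at this
    exact absurd this (ne_of_gt hAεpd.det_pos)
  have hBεpd : (B + ε • 1).PosDef := posDef_add_smul_one hB hε
  set P := G * (B + ε • 1) * G with hP
  have hPpd : P.PosDef := posDef_congr hBεpd hGsym hGdet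
  set S := psdSqrt P with hS
  have hSpsd : S.PosSemidef := psdSqrt_posSemidef hPpd.posSemidef
  have hSsym : Sᵀ = S := symm_of_psd hSpsd
  have hSsq : S * S = P := psdSqrt_mul_self hPpd.posSemidef
  have hSdet : IsUnit S.det := by
    refine isUnit_iff_ne_zero.mpr fun h0 => ?_
    have : P.det = S.det * S.det := by rw [← hSsq, det_mul]
    rw [h0, mul_zero] at this
    exact absurd this (ne_of_gt hPpd.det_pos)
  set Q := psdSqrt S with hQ
  have hQpsd : Q.PosSemidef := psdSqrt_posSemidef hSpsd
  have hQsym : Qᵀ = Q := symm_of_psd hQpsd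
  have hQsq : Q * Q = S := psdSqrt_mul_self hSpsd
  have hQdet : IsUnit Q.det := by
    refine isUnit_iff_ne_zero.mpr fun h0 => ?_
    have : S.det = Q.det * Q.det := by rw [← hQsq, det_mul]
    rw [h0, mul_zero] at this
    exact hSdet.ne_zero this
  refine ⟨Q * G⁻¹, by
      rw [det_mul]
      exact hQdet.mul (isUnit_nonsing_inv_det G hGdet), ?_⟩
  set N := Q * G⁻¹ with hN
  have hNT : Nᵀ = G⁻¹ * Q := by
    rw [hN, transpose_mul, transpose_nonsing_inv, hGsym, hQsym]
  have hNinv : N⁻¹ = G * Q⁻¹ := by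
    rw [hN, Matrix.mul_inv_rev, nonsing_inv_nonsing_inv G hGdet]
  have hNinvT : N⁻¹ᵀ = Q⁻¹ * G := by
    rw [hNinv, transpose_mul, transpose_nonsing_inv, hGsym, hQsym]
  -- M₁ = Nᵀ N = G⁻¹ S G⁻¹
  have hM1 : Nᵀ * N = G⁻¹ * S * G⁻¹ := by
    rw [hNT, hN, Matrix.mul_assoc, ← Matrix.mul_assoc Q Q G⁻¹, hQsq, ← Matrix.mul_assoc]
  -- M₂ = N⁻¹ N⁻ᵀ = G Q⁻¹ Q⁻¹ G
  have hM2 : N⁻¹ * N⁻¹ᵀ = G * Q⁻¹ * (Q⁻¹ * G) := by rw [hNinvT, hNinv]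
  -- PSD of the two
  have hM1psd : (Nᵀ * N).PosSemidef := by
    have := posSemidef_conjTranspose_mul_self (R := ℝ) N
    rwa [conjTranspose_eq_transpose_of_trivial] at this
  have hM2psd : (N⁻¹ * N⁻¹ᵀ).PosSemidef := by
    have := posSemidef_self_mul_conjTranspose (R := ℝ) N⁻¹
    rwa [conjTranspose_eq_transpose_of_trivial] at this
  -- trace identities
  have tr1 : ((Nᵀ * N) * (A + ε • 1)).trace = S.trace := by
    rw [hM1, ← hGsq]
    have : G⁻¹ * S * G⁻¹ * (G * G) = G⁻¹ * (S * G) := by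
      rw [Matrix.mul_assoc (G⁻¹ * S) G⁻¹ (G * G), nonsing_inv_mul_cancel_left G G hGdet,
        Matrix.mul_assoc]
    rw [this, trace_mul_comm, Matrix.mul_assoc, Matrix.mul_nonsing_inv G hGdet, mul_one]
  have tr2 : ((N⁻¹ * N⁻¹ᵀ) * (B + ε • 1)).trace = S.trace := by
    have e1 : G * Q⁻¹ * (Q⁻¹ * G) * (B + ε • 1) = G * Q⁻¹ * (Q⁻¹ * (G * (B + ε • 1))) := by
      simp only [Matrix.mul_assoc]
    have e2 : Q⁻¹ * (G * (B + ε • 1)) * (G * Q⁻¹) = Q⁻¹ * P * Q⁻¹ := by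
      simp only [hP, Matrix.mul_assoc]
    have e3 : Q⁻¹ * P * Q⁻¹ = S := by
      rw [← hSsq, ← hQsq]
      calc Q⁻¹ * (Q * Q * (Q * Q)) * Q⁻¹
          = (Q⁻¹ * (Q * (Q * (Q * Q)))) * Q⁻¹ := by simp only [Matrix.mul_assoc]
        _ = (Q * (Q * Q)) * Q⁻¹ := by rw [nonsing_inv_mul_cancel_left Q _ hQdet]
        _ = Q * Q * (Q * Q⁻¹) := by simp only [Matrix.mul_assoc]
        _ = Q * Q := by rw [Matrix.mul_nonsing_inv Q hQdet, mul_one]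
    rw [hM2, e1, trace_mul_comm, e2, e3]
  -- expand traces with the ε-term
  have exp1 : ((Nᵀ * N) * (A + ε • 1)).trace
      = ((Nᵀ * N) * A).trace + ε * (Nᵀ * N).trace := by
    rw [mul_add, trace_add, mul_smul_comm, mul_one, trace_smul, smul_eq_mul]
  have exp2 : ((N⁻¹ * N⁻¹ᵀ) * (B + ε • 1)).trace
      = ((N⁻¹ * N⁻¹ᵀ) * B).trace + ε * (N⁻¹ * N⁻¹ᵀ).trace := by
    rw [mul_add, trace_add, mul_smul_comm, mul_one, trace_smul, smul_eq_mul]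
  have h1 : ((Nᵀ * N) * A).trace ≤ S.trace := by
    rw [← tr1, exp1]
    nlinarith [psd_trace_nonneg' hM1psd, hε]
  have h2 : ((N⁻¹ * N⁻¹ᵀ) * B).trace ≤ S.trace := by
    rw [← tr2, exp2]
    nlinarith [psd_trace_nonneg' hM2psd, hε]
  linarith

lemma psd_abs_apply_le_trace {A : Matrix (Fin n) (Fin n) ℝ} (h : A.PosSemidef) (i j : Fin n) :
    |A i j| ≤ A.trace := by
  have diag : ∀ k, 0 ≤ A k k := fun k => by
    have := h.dotProduct_mulVec_nonneg (Pi.single k 1)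
    simp only [star_trivial, single_dotProduct, mulVec_single] at this
    simpa using this
  have hsym : ∀ k l, A l k = A k l := fun k l => by
    have := congrFun (congrFun (symm_of_psd h) k) l
    simpa [transpose_apply] using this
  have quad : ∀ (c : ℝ), 0 ≤ A i i + c * A i j + c * A j i + c^2 * A j j := by
    intro c
    have h5 := h.dotProduct_mulVec_nonneg (Pi.single i 1 + Pi.single j c)
    simp only [star_trivial, mulVec_add, dotProduct_add, add_dotProduct, mulVec_single,
      single_dotProduct, Pi.smul_apply, op_smul_eq_mul, col_apply] at h5
    nlinarith [h5]
  rcases eq_or_ne i j with rfl | hij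
  · rw [abs_of_nonneg (diag i)]
    have : A i i = ∑ k ∈ {i}, A k k := by simp
    rw [Matrix.trace, this]
    exact Finset.sum_le_sum_of_subset_of_nonneg (Finset.subset_univ _) (fun k _ _ => diag k)
  · have hdsum : A i i + A j j ≤ A.trace := by
      have : A i i + A j j = ∑ k ∈ ({i, j} : Finset (Fin n)), A k k :=
        (Finset.sum_pair (f := fun k => A k k) hij).symm
      rw [Matrix.trace, this]
      exact Finset.sum_le_sum_of_subset_of_nonneg (Finset.subset_univ _) (fun k _ _ => diag k)
    have h1 := quad 1
    have h2 := quad (-1)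
    rw [hsym i j] at h1 h2
    rw [abs_le]
    constructor <;> nlinarith [diag i, diag j]

lemma psd_trace_le {S : Matrix (Fin n) (Fin n) ℝ} (h : S.PosSemidef) :
    S.trace ≤ n + (S * S).trace := by
  have hsym : ∀ i j, S j i = S i j := fun i j => by
    have := congrFun (congrFun (symm_of_psd h) i) j
    simpa [transpose_apply] using this
  have diag : ∀ k, 0 ≤ S k k := fun k => by
    have := h.dotProduct_mulVec_nonneg (Pi.single k 1)
    simp only [star_trivial, single_dotProduct, mulVec_single] at this
    simpa using this
  have key : ∀ i, S i i ≤ 1 + (S * S) i i := by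
    intro i
    have h2 : S i i * S i i ≤ (S * S) i i := by
      rw [Matrix.mul_apply]
      refine Finset.single_le_sum (f := fun j => S i j * S j i) ?_ (Finset.mem_univ i)
      intro j _
      show 0 ≤ S i j * S j i
      rw [hsym]; exact mul_self_nonneg _
    nlinarith
  calc S.trace = ∑ i, S i i := rfl
    _ ≤ ∑ i : Fin n, (1 + (S * S) i i) := Finset.sum_le_sum fun i _ => key i
    _ = n + (S * S).trace := by rw [Finset.sum_add_distrib]; simp [Matrix.trace, Matrix.diag]

lemma key_matrix (hA : A.PosSemidef) (hB : B.PosSemidef) {c : ℝ}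
    (hc : ∀ N : Matrix (Fin n) (Fin n) ℝ, IsUnit N.det →
      c ≤ ((Nᵀ * N) * A).trace + ((N⁻¹ * N⁻¹ᵀ) * B).trace) :
    c ≤ 2 * (psdSqrt (psdSqrt A * B * psdSqrt A)).trace := by
  classical
  set ε : ℕ → ℝ := fun k => 1 / (k + 1) with hεdef
  have hεpos : ∀ k, 0 < ε k := fun k => by positivity
  have hεle : ∀ k, ε k ≤ 1 := fun k => by
    rw [hεdef]
    rw [div_le_one (by positivity)]
    exact le_add_of_nonneg_left (Nat.cast_nonneg k)
  set P : ℕ → Matrix (Fin n) (Fin n) ℝ :=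
    fun k => g hA (ε k) * (B + ε k • 1) * g hA (ε k) with hPdef
  have hPpsd : ∀ k, (P k).PosSemidef := fun k => by
    have h1 : (B + ε k • 1).PosSemidef := (posDef_add_smul_one hB (hεpos k)).posSemidef
    have h2 := h1.mul_mul_conjTranspose_same (g hA (ε k))
    rwa [conjTranspose_eq_transpose_of_trivial, symm_of_psd (g_posSemidef hA (ε k))] at h2
  set S : ℕ → Matrix (Fin n) (Fin n) ℝ := fun k => psdSqrt (P k) with hSdef
  have hSpsd : ∀ k, (S k).PosSemidef := fun k => psdSqrt_posSemidef (hPpsd k)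
  have hSsq : ∀ k, S k * S k = P k := fun k => psdSqrt_mul_self (hPpsd k)
  have hckey : ∀ k, c ≤ 2 * (S k).trace := by
    intro k
    obtain ⟨N, hNdet, hNle⟩ := eps_bound hA hB (hεpos k)
    exact le_trans (hc N hNdet) hNle
  -- uniform bound on trace (P k)
  set c₁ : ℝ := |(A * B).trace| + |A.trace| + |B.trace| + n with hc₁
  have htrP : ∀ k, (P k).trace ≤ c₁ := by
    intro k
    have e0 : (P k).trace = ((A + ε k • 1) * (B + ε k • 1)).trace := by
      show (g hA (ε k) * (B + ε k • 1) * g hA (ε k)).trace = _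
      rw [trace_mul_comm, ← Matrix.mul_assoc, g_sq hA (hεpos k).le]
    have e1 : (A + ε k • 1) * (B + ε k • 1)
        = A * B + ε k • A + ε k • B + (ε k * ε k) • (1 : Matrix (Fin n) (Fin n) ℝ) := by
      simp only [mul_add, add_mul, mul_smul_comm, smul_mul_assoc, mul_one, one_mul, smul_smul,
        smul_add]
      abel
    have e2 : (P k).trace
        = (A * B).trace + ε k * A.trace + ε k * B.trace + (ε k * ε k) * n := by
      rw [e0, e1, trace_add, trace_add, trace_add, trace_smul, trace_smul, trace_smul, trace_one]
      simp [smul_eq_mul]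
    rw [e2, hc₁]
    have h1 := hεpos k
    have h2 := hεle k
    have t0 : (A*B).trace ≤ |(A*B).trace| := le_abs_self _
    have t1 : ε k * A.trace ≤ |A.trace| := by
      calc ε k * A.trace ≤ ε k * |A.trace| :=
            mul_le_mul_of_nonneg_left (le_abs_self _) h1.le
        _ ≤ 1 * |A.trace| := mul_le_mul_of_nonneg_right h2 (abs_nonneg _)
        _ = |A.trace| := one_mul _
    have t2 : ε k * B.trace ≤ |B.trace| := by
      calc ε k * B.trace ≤ ε k * |B.trace| :=
            mul_le_mul_of_nonneg_left (le_abs_self _) h1.le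
        _ ≤ 1 * |B.trace| := mul_le_mul_of_nonneg_right h2 (abs_nonneg _)
        _ = |B.trace| := one_mul _
    have t3 : ε k * ε k * (n:ℝ) ≤ (n:ℝ) := by
      have : ε k * ε k ≤ 1 := by nlinarith
      nlinarith [Nat.cast_nonneg (α := ℝ) n]
    linarith
  set c₀ : ℝ := n + c₁ with hc₀
  have hSbdd : ∀ k i j, S k i j ∈ Set.Icc (-c₀) c₀ := by
    intro k i j
    have h1 := psd_abs_apply_le_trace (hSpsd k) i j
    have h2 := psd_trace_le (hSpsd k)
    rw [hSsq k] at h2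
    have h3 : |S k i j| ≤ c₀ := by
      rw [hc₀]
      have := htrP k
      linarith
    exact ⟨neg_le_of_abs_le h3, le_of_abs_le h3⟩
  -- compactness
  set K : Set (Matrix (Fin n) (Fin n) ℝ) :=
    Set.univ.pi fun _ : Fin n => Set.univ.pi fun _ : Fin n => Set.Icc (-c₀) c₀ with hK
  have hKc : IsCompact K := by
    rw [hK]
    exact isCompact_univ_pi fun _ => isCompact_univ_pi fun _ => isCompact_Icc
  have hmem : ∀ k, S k ∈ K := by
    intro k
    rw [hK]
    intro i _
    intro j _
    exact hSbdd k i j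
  haveI : FirstCountableTopology (Matrix (Fin n) (Fin n) ℝ) :=
    inferInstanceAs (FirstCountableTopology (Fin n → Fin n → ℝ))
  obtain ⟨T, hTK, φ, hφ, hconv⟩ := hKc.tendsto_subseq hmem
  -- limit of the parameters
  have hεφ : Filter.Tendsto (fun k => ε (φ k)) Filter.atTop (nhds 0) := by
    have h1 : Filter.Tendsto φ Filter.atTop Filter.atTop := hφ.tendsto_atTop
    exact tendsto_one_div_add_atTop_nhds_zero_nat.comp h1
  -- P (φ k) → P₀
  set P₀ : Matrix (Fin n) (Fin n) ℝ := psdSqrt A * B * psdSqrt A with hP₀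
  have hP₀psd : P₀.PosSemidef := by
    have h2 := hB.mul_mul_conjTranspose_same (psdSqrt A)
    rwa [conjTranspose_eq_transpose_of_trivial, symm_of_psd (psdSqrt_posSemidef hA)] at h2
  have hFcont : Continuous fun e : ℝ => g hA e * (B + e • 1) * g hA e := by
    have h1 : Continuous fun e : ℝ => B + e • (1 : Matrix (Fin n) (Fin n) ℝ) :=
      continuous_const.add (continuous_id.smul continuous_const)
    exact ((g_cont hA).matrix_mul h1).matrix_mul (g_cont hA)
  have hF0 : g hA 0 * (B + (0:ℝ) • 1) * g hA 0 = P₀ := by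
    rw [g_zero hA, zero_smul, add_zero]
  have hPconv : Filter.Tendsto (fun k => P (φ k)) Filter.atTop (nhds P₀) := by
    have := (hFcont.tendsto 0).comp hεφ
    rw [hF0] at this
    exact this
  -- T * T = P₀
  have hTT : T * T = P₀ := by
    have hmulcont : Continuous fun M : Matrix (Fin n) (Fin n) ℝ => M * M :=
      continuous_id.matrix_mul continuous_id
    have h1 : Filter.Tendsto (fun k => S (φ k) * S (φ k)) Filter.atTop (nhds (T * T)) :=
      (hmulcont.tendsto T).comp hconv
    have h2 : (fun k => S (φ k) * S (φ k)) = fun k => P (φ k) := funext fun k => hSsq (φ k)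
    rw [h2] at h1
    exact tendsto_nhds_unique h1 hPconv
  -- T is PSD
  have hentry : ∀ i j, Filter.Tendsto (fun k => S (φ k) i j) Filter.atTop (nhds (T i j)) := by
    intro i j
    have h1 := tendsto_pi_nhds.mp hconv i
    exact tendsto_pi_nhds.mp h1 j
  have hTpsd : T.PosSemidef := by
    refine posSemidef_iff_dotProduct_mulVec.mpr ⟨?_, ?_⟩
    · rw [IsHermitian, conjTranspose_eq_transpose_of_trivial]
      ext i j
      rw [transpose_apply]
      refine tendsto_nhds_unique ?_ (hentry i j)
      have h2 : (fun k => S (φ k) j i) = fun k => S (φ k) i j := funext fun k => by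
        have := congrFun (congrFun (symm_of_psd (hSpsd (φ k))) i) j
        simpa [transpose_apply] using this
      rw [← h2]
      exact hentry j i
    · intro x
      simp only [star_trivial]
      have hqcont : Continuous fun M : Matrix (Fin n) (Fin n) ℝ => x ⬝ᵥ M *ᵥ x :=
        continuous_const.dotProduct (continuous_id.matrix_mulVec continuous_const)
      have h1 : Filter.Tendsto (fun k => x ⬝ᵥ S (φ k) *ᵥ x) Filter.atTop
          (nhds (x ⬝ᵥ T *ᵥ x)) := (hqcont.tendsto T).comp hconv
      refine ge_of_tendsto h1 (Filter.Eventually.of_forall fun k => ?_)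
      have := (hSpsd (φ k)).dotProduct_mulVec_nonneg x
      simpa using this
  -- T = psdSqrt P₀
  have hTeq : T = psdSqrt P₀ := eq_psdSqrt hP₀psd hTpsd hTT
  -- conclude
  have htr : Filter.Tendsto (fun k => 2 * (S (φ k)).trace) Filter.atTop (nhds (2 * T.trace)) := by
    have h1 : Continuous fun M : Matrix (Fin n) (Fin n) ℝ => M.trace :=
      continuous_id.matrix_trace
    exact ((h1.tendsto T).comp hconv).const_mul 2
  have := ge_of_tendsto htr (Filter.Eventually.of_forall fun k => hckey (φ k))
  rwa [hTeq] at this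

end DL

namespace DLP
variable {Ω : Type*} [MeasurableSpace Ω] {ℙ : Measure Ω} [IsProbabilityMeasure ℙ] {n : ℕ}

lemma L2mul {f g : Ω → ℝ} (hf : MemLp f 2 ℙ) (hg : MemLp g 2 ℙ) :
    Integrable (fun ω => f ω * g ω) ℙ := by
  have h : (1:ℝ≥0∞)/1 = 1/2 + 1/2 := by
    rw [ENNReal.div_add_div_same, one_add_one_eq_two, ENNReal.div_self two_ne_zero
      ENNReal.ofNat_ne_top, div_one _]
  have := hg.smul (r := 1) hf
  exact memLp_one_iff_integrable.mp (by simpa [smul_eq_mul, Pi.mul_def] using this)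

lemma comp_memℒp {X : Ω → EuclideanSpace ℝ (Fin n)} (hX : MemLp X 2 ℙ) (i : Fin n) :
    MemLp (fun ω => X ω i) 2 ℙ := by
  have := (EuclideanSpace.proj (𝕜 := ℝ) i).comp_memLp' hX
  simpa [Function.comp_def, PiLp.proj_apply] using this

lemma mean_comp {X : Ω → EuclideanSpace ℝ (Fin n)} (hX : MemLp X 2 ℙ)
    (hmX : (∫ ω, X ω ∂ℙ) = 0) (i : Fin n) : (∫ ω, X ω i ∂ℙ) = 0 := by
  have h1 : ∫ ω, (EuclideanSpace.proj (𝕜 := ℝ) i) (X ω) ∂ℙ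
      = (EuclideanSpace.proj (𝕜 := ℝ) i) (∫ ω, X ω ∂ℙ) :=
    ContinuousLinearMap.integral_comp_comm _ (hX.integrable one_le_two)
  rw [hmX, map_zero] at h1
  simpa [PiLp.proj_apply] using h1

lemma cov_apply {X : Ω → EuclideanSpace ℝ (Fin n)} (hX : MemLp X 2 ℙ)
    (hmX : (∫ ω, X ω ∂ℙ) = 0) (i j : Fin n) :
    covMatrix ℙ X i j = ∫ ω, X ω i * X ω j ∂ℙ := by
  simp only [covMatrix, Matrix.of_apply, mean_comp hX hmX, sub_zero]

lemma cov_symm (X : Ω → EuclideanSpace ℝ (Fin n)) (i j : Fin n) :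
    covMatrix ℙ X i j = covMatrix ℙ X j i := by
  simp only [covMatrix, Matrix.of_apply]
  congr 1
  ext ω
  ring

end DLP

namespace DLP2
open DLP
variable {Ω : Type*} [MeasurableSpace Ω] {ℙ : Measure Ω} [IsProbabilityMeasure ℙ] {n : ℕ}

lemma norm_sq_eq_sum (x : EuclideanSpace ℝ (Fin n)) : ‖x‖^2 = ∑ i, x i * x i := by
  rw [EuclideanSpace.norm_eq, Real.sq_sqrt (Finset.sum_nonneg fun i _ => sq_nonneg _)]
  exact Finset.sum_congr rfl fun i _ => by rw [Real.norm_eq_abs, sq_abs, sq]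

lemma trace_cov {X : Ω → EuclideanSpace ℝ (Fin n)} (hX : MemLp X 2 ℙ)
    (hmX : (∫ ω, X ω ∂ℙ) = 0) :
    (covMatrix ℙ X).trace = ∫ ω, ‖X ω‖^2 ∂ℙ := by
  calc (covMatrix ℙ X).trace = ∑ i, covMatrix ℙ X i i := rfl
    _ = ∑ i, ∫ ω, X ω i * X ω i ∂ℙ := Finset.sum_congr rfl fun i _ => cov_apply hX hmX i i
    _ = ∫ ω, ∑ i, X ω i * X ω i ∂ℙ :=
        (integral_finset_sum _ fun i _ => L2mul (comp_memℒp hX i) (comp_memℒp hX i)).symm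
    _ = ∫ ω, ‖X ω‖^2 ∂ℙ := by
        refine integral_congr_ae (Filter.Eventually.of_forall fun ω => ?_)
        show (∑ i, X ω i * X ω i) = ‖X ω‖^2
        rw [norm_sq_eq_sum]

lemma integral_quad {X : Ω → EuclideanSpace ℝ (Fin n)} (hX : MemLp X 2 ℙ)
    (hmX : (∫ ω, X ω ∂ℙ) = 0) (M : Matrix (Fin n) (Fin n) ℝ) :
    ∫ ω, ∑ i, ∑ j, M i j * (X ω i * X ω j) ∂ℙ = (M * covMatrix ℙ X).trace := by
  have h1 : ∫ ω, ∑ i, ∑ j, M i j * (X ω i * X ω j) ∂ℙ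
      = ∑ i, ∑ j, M i j * covMatrix ℙ X i j := by
    rw [integral_finset_sum (f := fun i ω => ∑ j, M i j * (X ω i * X ω j)) _
      fun i _ => integrable_finset_sum _ fun j _ => (L2mul (comp_memℒp hX i) (comp_memℒp hX j)).const_mul _]
    refine Finset.sum_congr rfl fun i _ => ?_
    rw [integral_finset_sum (f := fun j ω => M i j * (X ω i * X ω j)) _ fun j _ => (L2mul (comp_memℒp hX i) (comp_memℒp hX j)).const_mul _]
    refine Finset.sum_congr rfl fun j _ => ?_
    rw [integral_const_mul, cov_apply hX hmX]
  rw [h1, Matrix.trace]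
  refine Finset.sum_congr rfl fun i _ => ?_
  rw [Matrix.diag, Matrix.mul_apply]
  exact Finset.sum_congr rfl fun j _ => by rw [cov_symm X i j]

lemma cov_posSemidef {X : Ω → EuclideanSpace ℝ (Fin n)} (hX : MemLp X 2 ℙ)
    (hmX : (∫ ω, X ω ∂ℙ) = 0) : (covMatrix ℙ X).PosSemidef := by
  refine posSemidef_iff_dotProduct_mulVec.mpr ⟨?_, ?_⟩
  · rw [Matrix.IsHermitian, conjTranspose_eq_transpose_of_trivial]
    ext i j
    rw [transpose_apply]
    exact cov_symm X j i
  · intro x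
    simp only [star_trivial]
    have hq : x ⬝ᵥ covMatrix ℙ X *ᵥ x = ∑ i, ∑ j, covMatrix ℙ X i j * (x i * x j) := by
      simp only [dotProduct, mulVec, Finset.mul_sum]
      exact Finset.sum_congr rfl fun i _ => Finset.sum_congr rfl fun j _ => by ring
    rw [hq]
    have h2 : ∀ i j, covMatrix ℙ X i j * (x i * x j)
        = ∫ ω, (x i * X ω i) * (x j * X ω j) ∂ℙ := by
      intro i j
      rw [cov_apply hX hmX, ← integral_mul_const]
      refine integral_congr_ae (Filter.Eventually.of_forall fun ω => ?_)
      show X ω i * X ω j * (x i * x j) = x i * X ω i * (x j * X ω j)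
      ring
    calc ∑ i, ∑ j, covMatrix ℙ X i j * (x i * x j)
        = ∑ i, ∑ j, ∫ ω, (x i * X ω i) * (x j * X ω j) ∂ℙ :=
          Finset.sum_congr rfl fun i _ => Finset.sum_congr rfl fun j _ => h2 i j
      _ = ∫ ω, ∑ i, ∑ j, (x i * X ω i) * (x j * X ω j) ∂ℙ := by
          have hint : ∀ i j : Fin n, Integrable (fun ω => (x i * X ω i) * (x j * X ω j)) ℙ := by
            intro i j
            have h3 := (L2mul (comp_memℒp hX i) (comp_memℒp hX j)).const_mul (x i * x j)
            refine h3.congr (Filter.Eventually.of_forall fun ω => ?_)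
            show x i * x j * (X ω i * X ω j) = x i * X ω i * (x j * X ω j)
            ring
          rw [integral_finset_sum _ fun i _ => integrable_finset_sum _ fun j _ => hint i j]
          exact Finset.sum_congr rfl fun i _ =>
            (integral_finset_sum _ fun j _ => hint i j).symm
      _ = ∫ ω, (∑ i, x i * X ω i)^2 ∂ℙ := by
          refine integral_congr_ae (Filter.Eventually.of_forall fun ω => ?_)
          show (∑ i, ∑ j, (x i * X ω i) * (x j * X ω j)) = (∑ i, x i * X ω i)^2
          rw [sq, Finset.sum_mul_sum]
      _ ≥ 0 := integral_nonneg fun ω => sq_nonneg _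

end DLP2

/-- Dowson–Landau upper bound, zero-mean case. For square-integrable,
zero-mean random vectors `X Y : Ω → ℝⁿ` with covariance matrices `Σ_X`, `Σ_Y`,
`𝔼‖X − Y‖² ≤ tr Σ_X + tr Σ_Y + 2 tr((Σ_X^{1/2} Σ_Y Σ_X^{1/2})^{1/2})`. -/
theorem stmt_3 {Ω : Type*} [MeasurableSpace Ω] (ℙ : Measure Ω) [IsProbabilityMeasure ℙ]
    {n : ℕ} (X Y : Ω → EuclideanSpace ℝ (Fin n))
    (hX : MemLp X 2 ℙ) (hY : MemLp Y 2 ℙ)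
    (hmX : (∫ ω, X ω ∂ℙ) = 0) (hmY : (∫ ω, Y ω ∂ℙ) = 0) :
    ∫ ω, ‖X ω - Y ω‖ ^ 2 ∂ℙ ≤
      (covMatrix ℙ X).trace + (covMatrix ℙ Y).trace +
        2 * (psdSqrt (psdSqrt (covMatrix ℙ X) * covMatrix ℙ Y *
          psdSqrt (covMatrix ℙ X))).trace := by

  classical
  have hApsd : (covMatrix ℙ X).PosSemidef := DLP2.cov_posSemidef hX hmX
  have hBpsd : (covMatrix ℙ Y).PosSemidef := DLP2.cov_posSemidef hY hmY
  have hIX2 : Integrable (fun ω => ‖X ω‖^2) ℙ := (memLp_two_iff_integrable_sq_norm hX.1).mp hX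
  have hIY2 : Integrable (fun ω => ‖Y ω‖^2) ℙ := (memLp_two_iff_integrable_sq_norm hY.1).mp hY
  have hIXY : Integrable (fun ω => ∑ i, X ω i * Y ω i) ℙ :=
    integrable_finset_sum _ fun i _ => DLP.L2mul (DLP.comp_memℒp hX i) (DLP.comp_memℒp hY i)
  have hexp : ∀ ω, ‖X ω - Y ω‖^2 = ‖X ω‖^2 + ‖Y ω‖^2 - 2 * ∑ i, X ω i * Y ω i := by
    intro ω
    rw [norm_sub_sq_real]
    have hinner : inner ℝ (X ω) (Y ω) = ∑ i, X ω i * Y ω i := by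
      rw [PiLp.inner_apply]
      exact Finset.sum_congr rfl fun i _ => by
        simp [RCLike.inner_apply, conj_trivial, mul_comm]
    rw [hinner]; ring
  have hLHS : ∫ ω, ‖X ω - Y ω‖^2 ∂ℙ
      = (∫ ω, ‖X ω‖^2 ∂ℙ) + (∫ ω, ‖Y ω‖^2 ∂ℙ) - 2 * ∫ ω, ∑ i, X ω i * Y ω i ∂ℙ := by
    calc ∫ ω, ‖X ω - Y ω‖^2 ∂ℙ
        = ∫ ω, (‖X ω‖^2 + ‖Y ω‖^2 - 2 * ∑ i, X ω i * Y ω i) ∂ℙ :=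
          integral_congr_ae (Filter.Eventually.of_forall fun ω => hexp ω)
      _ = (∫ ω, (‖X ω‖^2 + ‖Y ω‖^2) ∂ℙ) - ∫ ω, 2 * ∑ i, X ω i * Y ω i ∂ℙ :=
          integral_sub (hIX2.add hIY2) (hIXY.const_mul 2)
      _ = (∫ ω, ‖X ω‖^2 ∂ℙ) + (∫ ω, ‖Y ω‖^2 ∂ℙ) - 2 * ∫ ω, ∑ i, X ω i * Y ω i ∂ℙ := by
          rw [integral_add hIX2 hIY2, integral_const_mul]
  have hkey : -(2 * ∫ ω, ∑ i, X ω i * Y ω i ∂ℙ) ≤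
      2 * (psdSqrt (psdSqrt (covMatrix ℙ X) * covMatrix ℙ Y * psdSqrt (covMatrix ℙ X))).trace := by
    apply DL.key_matrix hApsd hBpsd
    intro N hN
    have hpt : ∀ ω, -(2 * ∑ i, X ω i * Y ω i) ≤
        (∑ i, ∑ j, (Nᵀ * N) i j * (X ω i * X ω j))
          + ∑ i, ∑ j, (N⁻¹ * N⁻¹ᵀ) i j * (Y ω i * Y ω j) := by
      intro ω
      set x : Fin n → ℝ := fun i => X ω i with hx
      set y : Fin n → ℝ := fun i => Y ω i with hy
      have h0 : 0 ≤ (N *ᵥ x + N⁻¹ᵀ *ᵥ y) ⬝ᵥ (N *ᵥ x + N⁻¹ᵀ *ᵥ y) :=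
        Finset.sum_nonneg fun i _ => mul_self_nonneg _
      have e : (N *ᵥ x + N⁻¹ᵀ *ᵥ y) ⬝ᵥ (N *ᵥ x + N⁻¹ᵀ *ᵥ y)
          = x ⬝ᵥ (Nᵀ * N) *ᵥ x + 2 * (x ⬝ᵥ y) + y ⬝ᵥ (N⁻¹ * N⁻¹ᵀ) *ᵥ y := by
        rw [dotProduct_add, add_dotProduct, add_dotProduct,
          DL.mulVec_dot_mulVec N N x x, DL.mulVec_dot_mulVec N (N⁻¹ᵀ) x y,
          DL.mulVec_dot_mulVec (N⁻¹ᵀ) N y x, DL.mulVec_dot_mulVec (N⁻¹ᵀ) (N⁻¹ᵀ) y y,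
          transpose_transpose,
          show Nᵀ * N⁻¹ᵀ = (N⁻¹ * N)ᵀ from (transpose_mul _ _).symm,
          nonsing_inv_mul N hN, transpose_one, one_mulVec, one_mulVec]
        rw [dotProduct_comm y x]
        ring
      have hq1 : x ⬝ᵥ (Nᵀ * N) *ᵥ x = ∑ i, ∑ j, (Nᵀ * N) i j * (x i * x j) := by
        simp only [dotProduct, mulVec, Finset.mul_sum]
        exact Finset.sum_congr rfl fun i _ => Finset.sum_congr rfl fun j _ => by ring
      have hq2 : y ⬝ᵥ (N⁻¹ * N⁻¹ᵀ) *ᵥ y = ∑ i, ∑ j, (N⁻¹ * N⁻¹ᵀ) i j * (y i * y j) := by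
        simp only [dotProduct, mulVec, Finset.mul_sum]
        exact Finset.sum_congr rfl fun i _ => Finset.sum_congr rfl fun j _ => by ring
      have hxy : x ⬝ᵥ y = ∑ i, x i * y i := rfl
      rw [e, hq1, hq2, hxy] at h0
      show -(2 * ∑ i, x i * y i) ≤
        (∑ i, ∑ j, (Nᵀ * N) i j * (x i * x j)) + ∑ i, ∑ j, (N⁻¹ * N⁻¹ᵀ) i j * (y i * y j)
      linarith [h0]
    have hIq1 : Integrable (fun ω => ∑ i, ∑ j, (Nᵀ * N) i j * (X ω i * X ω j)) ℙ :=
      integrable_finset_sum _ fun i _ => integrable_finset_sum _ fun j _ =>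
        (DLP.L2mul (DLP.comp_memℒp hX i) (DLP.comp_memℒp hX j)).const_mul _
    have hIq2 : Integrable (fun ω => ∑ i, ∑ j, (N⁻¹ * N⁻¹ᵀ) i j * (Y ω i * Y ω j)) ℙ :=
      integrable_finset_sum _ fun i _ => integrable_finset_sum _ fun j _ =>
        (DLP.L2mul (DLP.comp_memℒp hY i) (DLP.comp_memℒp hY j)).const_mul _
    have hIneg : Integrable (fun ω => -(2 * ∑ i, X ω i * Y ω i)) ℙ := by
      exact (hIXY.const_mul 2).neg
    have hmono := integral_mono (f := fun ω => -(2 * ∑ i, X ω i * Y ω i))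
      (g := fun ω => (∑ i, ∑ j, (Nᵀ * N) i j * (X ω i * X ω j))
        + ∑ i, ∑ j, (N⁻¹ * N⁻¹ᵀ) i j * (Y ω i * Y ω j)) hIneg (hIq1.add hIq2) hpt
    rw [integral_neg, integral_const_mul, integral_add hIq1 hIq2,
      DLP2.integral_quad hX hmX (Nᵀ * N), DLP2.integral_quad hY hmY (N⁻¹ * N⁻¹ᵀ)] at hmono
    exact hmono
  rw [hLHS, DLP2.trace_cov hX hmX, DLP2.trace_cov hY hmY]
  linarith [hkey]
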